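/- arXiv:2301.02628 — 2 statements merged into one kernel-verified Lean document; each statement's English description precedes it below -/
import Mathlib

section
/- Suppose S is an admissible pinnacle set of B_{2k+1} that is not admissible in D_{2k+1}, with positive part P = S ∩ ℕ and negative part N = S ∩ (-ℕ). Then P consists precisely of the smallest k - |N| elements of {1,...,2k+1} \ (-N). -/
/-- The pinnacle set of a word `w : Fin n → ℤ`: values `w i` (for `0 < i < n-1`)
strictly larger than both neighbors. -/
def PinSet (n : ℕ) (w : Fin n → ℤ) : Set ℤ :=
  {x | ∃ (i : ℕ) (h0 : 0 < i) (h2 : i + 1 < n),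
    w ⟨i, by omega⟩ = x ∧ w ⟨i - 1, by omega⟩ < w ⟨i, by omega⟩ ∧
      w ⟨i + 1, h2⟩ < w ⟨i, by omega⟩}

/-- `w : Fin n → ℤ` is the one-line notation of a signed permutation of rank `n`:
the absolute values of its entries are distinct elements of `{1,...,n}`
(hence a bijection onto `{1,...,n}`). -/
def IsSignedPerm (n : ℕ) (w : Fin n → ℤ) : Prop :=
  (∀ i, 1 ≤ |w i| ∧ |w i| ≤ (n : ℤ)) ∧ Function.Injective fun i => |w i|

/-- `S` is an admissible pinnacle set of the hyperoctahedral group `B_n`. -/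
def APSB (n : ℕ) (S : Finset ℤ) : Prop :=
  ∃ w : Fin n → ℤ, IsSignedPerm n w ∧ PinSet n w = ↑S

/-- `S` is an admissible pinnacle set of the type `D` group `D_n`
(signed permutations with an even number of negative one-line entries). -/
def APSD (n : ℕ) (S : Finset ℤ) : Prop :=
  ∃ w : Fin n → ℤ, IsSignedPerm n w ∧
    Even (Finset.univ.filter fun i => w i < 0).card ∧ PinSet n w = ↑S

/-- `S` is an admissible pinnacle set of the symmetric group `S_n`
(an unsigned permutation is a signed permutation with all entries positive). -/
def APSA (n : ℕ) (S : Finset ℤ) : Prop :=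
  ∃ w : Fin n → ℤ, IsSignedPerm n w ∧ (∀ i, 0 < w i) ∧ PinSet n w = ↑S

/-- `T` is an admissible pinnacle set of the totally ordered finite set `X ⊆ ℤ`:
it is the pinnacle set of some arrangement of the elements of `X`. -/
def APSOn (X : Finset ℤ) (T : Finset ℤ) : Prop :=
  ∃ w : Fin X.card → ℤ, Function.Injective w ∧ (∀ i, w i ∈ X) ∧
    PinSet X.card w = ↑T

/-!
Let `t = |S|` and `U = {1, …, n} \ |S|`. Pinnacles are never adjacent, so `2t + 1 ≤ n`.
Conversely, list `S` increasingly as `p₁ < ⋯ < p_t` and `-U` increasingly as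
`y₁ < ⋯ < y_{n-t}`; the word `y₁ p₁ y₂ p₂ ⋯ y_t p_t y_{t+1} ⋯ y_{n-t}` is a signed permutation
with pinnacle set `S` as soon as `y_{j+1} < p_j` for every `j`. This holds for a negative
pinnacle `q = p_j` because, in any signed permutation with pinnacle set `S`, the right neighbours
of the pinnacles `≤ q` together with the left neighbour of the first of them carry more than `j`
distinct values of `-U` below `q`. Replacing the last entry `y_{n-t} = -min U` by `min U` keeps
the pinnacle set if `2t + 1 < n` or `min U < max S`, and changes the parity of the number of
negative entries, so one of the two words lies in `D_n`. Hence if `S` is not admissible in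
`D_{2k+1}`, then `t = k` and every pinnacle lies below `min U`.
-/

open Finset

namespace Finset

variable {α : Type*} [LinearOrder α]

theorem exists_strictMonoOn_image_range [Nonempty α] (F : Finset α) :
    ∃ e : ℕ → α, StrictMonoOn e (Set.Iio #F) ∧ (range #F).image e = F := by
  let e : ℕ → α := fun a =>
    if h : a < #F then F.orderEmbOfFin rfl ⟨a, h⟩ else Classical.arbitrary α
  refine ⟨e, fun a ha b hb hab => ?_, ?_⟩
  · simp only [e, dif_pos (show a < #F from ha), dif_pos (show b < #F from hb)]
    exact (F.orderEmbOfFin rfl).strictMono hab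
  · ext x
    simp only [mem_image, mem_range]
    constructor
    · rintro ⟨a, ha, rfl⟩
      simp [e, ha]
    · intro hx
      obtain ⟨⟨a, ha⟩, rfl⟩ : x ∈ Set.range (F.orderEmbOfFin rfl) := by
        rwa [range_orderEmbOfFin]
      exact ⟨a, ha, by simp [e, ha]⟩

theorem filter_lt_eq_image_range {F : Finset α} {m : ℕ} {e : ℕ → α}
    (he : StrictMonoOn e (Set.Iio m)) (hF : (range m).image e = F) {b : ℕ} (hb : b < m) :
    {u ∈ F | u < e b} = (range b).image e := by
  ext x
  simp only [← hF, mem_filter, mem_image, mem_range]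
  constructor
  · rintro ⟨⟨a, ha, rfl⟩, hab⟩
    exact ⟨a, (he.lt_iff_lt ha hb).mp hab, rfl⟩
  · rintro ⟨a, hab, rfl⟩
    exact ⟨⟨a, by omega, rfl⟩, he (Set.mem_Iio.mpr (by omega)) hb hab⟩

theorem card_filter_lt_of_strictMonoOn {F : Finset α} {m : ℕ} {e : ℕ → α}
    (he : StrictMonoOn e (Set.Iio m)) (hF : (range m).image e = F) {b : ℕ} (hb : b < m) :
    #{u ∈ F | u < e b} = b := by
  rw [filter_lt_eq_image_range he hF hb, card_image_of_injOn, card_range]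
  exact he.injOn.mono fun a ha => Set.mem_Iio.mpr ((mem_range.mp ha).trans hb)

end Finset

theorem pinSet_subset_range {n : ℕ} (w : Fin n → ℤ) : PinSet n w ⊆ Set.range w := by
  rintro x ⟨i, -, -, rfl, -⟩
  exact ⟨_, rfl⟩

theorem exists_eq_comp_val {n : ℕ} (w : Fin n → ℤ) :
    ∃ v : ℕ → ℤ, w = fun i : Fin n => v i :=
  ⟨fun i => if h : i < n then w ⟨i, h⟩ else 0, by funext i; simp [i.2]⟩

def peaks (n : ℕ) (v : ℕ → ℤ) : Finset ℕ :=
  {i ∈ Ioo 0 (n - 1) | v (i - 1) < v i ∧ v (i + 1) < v i}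

theorem mem_peaks {n : ℕ} {v : ℕ → ℤ} {i : ℕ} :
    i ∈ peaks n v ↔ 0 < i ∧ i + 1 < n ∧ v (i - 1) < v i ∧ v (i + 1) < v i := by
  simp only [peaks, mem_filter, mem_Ioo]
  omega

theorem pinSet_eq_image_peaks (n : ℕ) (v : ℕ → ℤ) :
    PinSet n (fun i : Fin n => v i) = ↑((peaks n v).image v) := by
  ext x
  simp only [PinSet, Set.mem_ofPred_eq, coe_image, Set.mem_image, mem_coe, mem_peaks]
  constructor
  · rintro ⟨i, h0, hn, rfl, hl, hr⟩
    exact ⟨i, ⟨h0, hn, hl, hr⟩, rfl⟩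
  · rintro ⟨i, ⟨h0, hn, hl, hr⟩, rfl⟩
    exact ⟨i, h0, hn, rfl, hl, hr⟩

theorem succ_notMem_peaks {n : ℕ} {v : ℕ → ℤ} {i : ℕ} (hi : i ∈ peaks n v) :
    i + 1 ∉ peaks n v := fun h =>
  (mem_peaks.mp hi).2.2.2.asymm (by simpa using (mem_peaks.mp h).2.2.1)

theorem card_peaks_le (n : ℕ) (v : ℕ → ℤ) : #(peaks n v) ≤ (n - 1) / 2 := by
  have hmaps : Set.MapsTo (fun i => (i - 1) / 2) (peaks n v) (range ((n - 1) / 2)) := by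
    intro i hi
    simp only [mem_coe, mem_peaks, mem_range] at hi ⊢
    omega
  have hinj : Set.InjOn (fun i => (i - 1) / 2) (peaks n v) := by
    intro i hi j hj hij
    have hi' := mem_peaks.mp hi
    have hj' := mem_peaks.mp hj
    simp only at hij
    rcases (by omega : i = j ∨ j = i + 1 ∨ i = j + 1) with h | rfl | rfl
    · exact h
    · exact absurd hj (succ_notMem_peaks hi)
    · exact absurd hi (succ_notMem_peaks hj)
  simpa using card_le_card_of_injOn _ hmaps hinj

open scoped Pointwise

noncomputable def absCompl (n : ℕ) (S : Finset ℤ) : Finset ℤ := Icc 1 (n : ℤ) \ S.image abs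

theorem eq_of_abs_eq_of_isSignedPerm {n : ℕ} {v : ℕ → ℤ}
    (hw : IsSignedPerm n fun i : Fin n => v i) {i j : ℕ} (hi : i < n) (hj : j < n)
    (h : |v i| = |v j|) : i = j :=
  congrArg Fin.val (hw.2 (a₁ := ⟨i, hi⟩) (a₂ := ⟨j, hj⟩) h)

theorem mem_neg_absCompl_of_notMem_peaks {n : ℕ} {v : ℕ → ℤ}
    (hw : IsSignedPerm n fun i : Fin n => v i) {r : ℕ} (hr : r < n) (hrp : r ∉ peaks n v)
    (hr0 : v r < 0) : v r ∈ -absCompl n ((peaks n v).image v) := by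
  have hb : 1 ≤ |v r| ∧ |v r| ≤ n := hw.1 ⟨r, hr⟩
  rw [abs_of_neg hr0] at hb
  simp only [mem_neg', absCompl, mem_sdiff, mem_Icc, mem_image, not_exists, not_and]
  refine ⟨hb, fun s ⟨i, hi, his⟩ he => hrp ?_⟩
  rw [← his, ← abs_of_neg hr0] at he
  rwa [← eq_of_abs_eq_of_isSignedPerm hw (mem_peaks.mp hi).2.1.le hr he]

theorem card_filter_le_lt_card_filter_lt {n : ℕ} {v : ℕ → ℤ}
    (hw : IsSignedPerm n fun i : Fin n => v i) {q : ℤ} (hq : q ∈ (peaks n v).image v)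
    (hq0 : q < 0) :
    #{s ∈ (peaks n v).image v | s ≤ q} <
      #{x ∈ -absCompl n ((peaks n v).image v) | x < q} := by
  set I := {i ∈ peaks n v | v i ≤ q}
  obtain ⟨p, hp, rfl⟩ := mem_image.mp hq
  have hIne : I.Nonempty := ⟨p, mem_filter.mpr ⟨hp, le_rfl⟩⟩
  set i₀ := I.min' hIne
  have hi₀ : i₀ ∈ peaks n v := (mem_filter.mp (I.min'_mem hIne)).1
  have hi₀q : v i₀ ≤ v p := (mem_filter.mp (I.min'_mem hIne)).2
  set R := insert (i₀ - 1) (I.image (· + 1))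
  have hRcard : #R = #I + 1 := by
    rw [card_insert_of_notMem, card_image_of_injective _ (add_left_injective 1)]
    intro h
    obtain ⟨i, hi, he⟩ := mem_image.mp h
    have := I.min'_le i hi
    have := (mem_peaks.mp hi₀).1
    omega
  have hR : ∀ r ∈ R, r < n ∧ v r < v p ∧ r ∉ peaks n v := by
    intro r hr
    rcases mem_insert.mp hr with hr | hr
    · rw [hr]
      obtain ⟨h0, hn, hl, -⟩ := mem_peaks.mp hi₀
      refine ⟨by omega, hl.trans_le hi₀q, fun h => succ_notMem_peaks h ?_⟩
      rwa [Nat.sub_add_cancel h0]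
    · obtain ⟨i, hi, rfl⟩ := mem_image.mp hr
      obtain ⟨hi, hiq⟩ := mem_filter.mp hi
      obtain ⟨-, hn, -, hr⟩ := mem_peaks.mp hi
      exact ⟨hn, hr.trans_le hiq, succ_notMem_peaks hi⟩
  have hmaps : Set.MapsTo v R
      ({x ∈ -absCompl n ((peaks n v).image v) | x < v p} : Finset ℤ) := fun r hr =>
    have ⟨hrn, hrq, hrp⟩ := hR r hr
    mem_filter.mpr ⟨mem_neg_absCompl_of_notMem_peaks hw hrn hrp (hrq.trans hq0), hrq⟩
  have hinj : Set.InjOn v R := fun r hr r' hr' he =>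
    eq_of_abs_eq_of_isSignedPerm hw (hR r hr).1 (hR r' hr').1 (congrArg abs he)
  calc #{s ∈ (peaks n v).image v | s ≤ v p} = #(I.image v) := by rw [filter_image]
    _ ≤ #I := card_image_le
    _ < #R := by omega
    _ ≤ _ := card_le_card_of_injOn v hmaps hinj

/-- The word `valley 0, peak 0, valley 1, peak 1, …, valley (t - 1), peak (t - 1), valley t,
valley (t + 1), …`. -/
def zigzag (t : ℕ) (peak valley : ℕ → ℤ) (i : ℕ) : ℤ :=
  if i < 2 * t then (if i % 2 = 0 then valley (i / 2) else peak (i / 2)) else valley (i - t)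

section Zigzag

variable {t : ℕ} {peak valley : ℕ → ℤ}

theorem zigzag_two_mul {j : ℕ} (hj : j ≤ t) : zigzag t peak valley (2 * j) = valley j := by
  unfold zigzag
  split_ifs with h h' <;> first | omega | (congr 1; omega)

theorem zigzag_two_mul_add_one {j : ℕ} (hj : j < t) :
    zigzag t peak valley (2 * j + 1) = peak j := by
  unfold zigzag
  split_ifs with h h' <;> first | omega | (congr 1; omega)

theorem zigzag_of_le {i : ℕ} (hi : 2 * t ≤ i) : zigzag t peak valley i = valley (i - t) :=
  if_neg (by omega)

theorem zigzag_update_of_ne {a i : ℕ} {x : ℤ} (ha : t ≤ a) (hi : i ≠ a + t) :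
    zigzag t peak (Function.update valley a x) i = zigzag t peak valley i := by
  unfold zigzag
  split_ifs
  · rw [Function.update_of_ne (by omega)]
  · rfl
  · rw [Function.update_of_ne (by omega)]

theorem peaks_zigzag {n : ℕ} (htn : 2 * t < n) (hpv : ∀ j < t, valley (j + 1) < peak j)
    (hmono : StrictMonoOn valley (Set.Iio (n - t))) :
    peaks n (zigzag t peak valley) = (range t).image (2 * · + 1) := by
  ext i
  simp only [mem_peaks, mem_image, mem_range]
  constructor
  · rintro ⟨h0, hn, hl, hr⟩
    by_cases hit : 2 * t ≤ i
    · rw [zigzag_of_le hit, zigzag_of_le (by omega)] at hr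
      have := hmono (show i - t < n - t by omega) (show i + 1 - t < n - t by omega) (by omega)
      omega
    obtain ⟨j, rfl | rfl⟩ := Nat.even_or_odd' i
    · rw [zigzag_two_mul (by omega), show 2 * j - 1 = 2 * (j - 1) + 1 by omega,
        zigzag_two_mul_add_one (by omega)] at hl
      have := hpv (j - 1) (by omega)
      rw [Nat.sub_add_cancel (by omega)] at this
      omega
    · exact ⟨j, by omega, rfl⟩
  · rintro ⟨j, hj, rfl⟩
    rw [Nat.add_sub_cancel, zigzag_two_mul hj.le, zigzag_two_mul_add_one hj,
      show 2 * j + 1 + 1 = 2 * (j + 1) by ring, zigzag_two_mul hj]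
    have := hmono (show j < n - t by omega) (show j + 1 < n - t by omega) (by omega)
    exact ⟨by omega, by omega, this.trans (hpv j hj), hpv j hj⟩

theorem pinSet_zigzag {n : ℕ} (htn : 2 * t < n) (hpv : ∀ j < t, valley (j + 1) < peak j)
    (hmono : StrictMonoOn valley (Set.Iio (n - t))) :
    PinSet n (fun i : Fin n => zigzag t peak valley i) = ↑((range t).image peak) := by
  rw [pinSet_eq_image_peaks, peaks_zigzag htn hpv hmono, image_image]
  exact congrArg _ (image_congr fun j hj => zigzag_two_mul_add_one (mem_range.mp hj))

theorem isSignedPerm_of_forall_exists_abs_eq {n : ℕ} (w : Fin n → ℤ)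
    (h : ∀ x ∈ Icc 1 (n : ℤ), ∃ i, |w i| = x) : IsSignedPerm n w := by
  have hsub : Icc 1 (n : ℤ) ⊆ univ.image (|w ·|) := fun x hx => by simpa using h x hx
  have hcard : #(univ.image (|w ·|)) ≤ #(Icc 1 (n : ℤ)) := by
    simpa using card_image_le (s := univ) (f := (|w ·|))
  have heq := eq_of_superset_of_card_ge hsub hcard
  refine ⟨fun i => mem_Icc.mp (heq ▸ mem_image_of_mem (|w ·|) (mem_univ i)), ?_⟩
  have : #(univ.image (|w ·|)) = #(univ : Finset (Fin n)) := by rw [heq]; simp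
  simpa using card_image_iff.mp this

theorem isSignedPerm_zigzag {n : ℕ} (htn : 2 * t < n)
    (hcover : ∀ x ∈ Icc 1 (n : ℤ),
      (∃ j < t, |peak j| = x) ∨ ∃ a < n - t, |valley a| = x) :
    IsSignedPerm n fun i : Fin n => zigzag t peak valley i := by
  refine isSignedPerm_of_forall_exists_abs_eq _ fun x hx => ?_
  rcases hcover x hx with ⟨j, hj, rfl⟩ | ⟨a, ha, rfl⟩
  · exact ⟨⟨2 * j + 1, by omega⟩, by simp [zigzag_two_mul_add_one hj]⟩
  · by_cases hat : a ≤ t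
    · exact ⟨⟨2 * a, by omega⟩, by simp [zigzag_two_mul hat]⟩
    · exact ⟨⟨a + t, by omega⟩, by simp [zigzag_of_le (show 2 * t ≤ a + t by omega)]⟩

end Zigzag

theorem apsd_of_flip_sign {n : ℕ} {S : Finset ℤ} {w₀ w₁ : Fin n → ℤ} (i₀ : Fin n)
    (hw₀ : IsSignedPerm n w₀) (hw₁ : IsSignedPerm n w₁)
    (hS₀ : PinSet n w₀ = ↑S) (hS₁ : PinSet n w₁ = ↑S)
    (hagree : ∀ i ≠ i₀, w₁ i = w₀ i) (h₀ : w₀ i₀ < 0) (h₁ : 0 < w₁ i₀) :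
    APSD n S := by
  have hneg :
      univ.filter (fun i => w₀ i < 0) = insert i₀ (univ.filter fun i => w₁ i < 0) := by
    ext i
    by_cases hi : i = i₀
    · subst hi; simp [h₀]
    · simp [hi, hagree i hi]
  have hcard : #(univ.filter fun i => w₀ i < 0) = #(univ.filter fun i => w₁ i < 0) + 1 := by
    rw [hneg, card_insert_of_notMem (by simp [h₁.le])]
  rcases Nat.even_or_odd #(univ.filter fun i => w₁ i < 0) with he | ho
  · exact ⟨w₁, hw₁, he, hS₁⟩
  · exact ⟨w₀, hw₀, hcard ▸ ho.add_one, hS₀⟩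

theorem card_absCompl {n : ℕ} {S : Finset ℤ} (hS : S.image abs ⊆ Icc 1 (n : ℤ))
    (hinj : Set.InjOn abs (S : Set ℤ)) : #(absCompl n S) = n - #S := by
  rw [absCompl, card_sdiff_of_subset hS, Int.card_Icc, card_image_of_injOn hinj]
  simp

theorem neg_of_mem_neg_absCompl {n : ℕ} {S : Finset ℤ} {x : ℤ} (hx : x ∈ -absCompl n S) :
    x < 0 := by
  have := (mem_Icc.mp (mem_sdiff.mp (mem_neg'.mp hx)).1).1
  omega

theorem StrictMonoOn.update_neg_of_neg {y : ℕ → ℤ} {m : ℕ} (hy : StrictMonoOn y (Set.Iio m))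
    (hneg : ∀ a < m, y a < 0) :
    StrictMonoOn (Function.update y (m - 1) (-y (m - 1))) (Set.Iio m) := by
  intro a ha b hb hab
  simp only [Set.mem_Iio] at ha hb
  rw [Function.update_of_ne (by omega : a ≠ m - 1)]
  by_cases hbm : b = m - 1
  · rw [hbm, Function.update_self]
    have := hneg a ha
    have := hneg (m - 1) (by omega)
    omega
  · rw [Function.update_of_ne hbm]
    exact hy ha hb hab

section Enumeration

variable {n : ℕ} {S : Finset ℤ} {pin y : ℕ → ℤ}

theorem valley_succ_lt_peak (hpin : StrictMonoOn pin (Set.Iio #S))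
    (hpinS : (range #S).image pin = S) (hy : StrictMonoOn y (Set.Iio (n - #S)))
    (hyV : (range (n - #S)).image y = -absCompl n S) (htn : 2 * #S < n)
    (hK : ∀ q ∈ S, q < 0 → #{s ∈ S | s ≤ q} < #{x ∈ -absCompl n S | x < q}) :
    ∀ j < #S, y (j + 1) < pin j := by
  intro j hj
  by_contra! hle
  have hyneg := neg_of_mem_neg_absCompl (hyV ▸ mem_image_of_mem y (mem_range.mpr
    (show j + 1 < n - #S by omega)))
  have hpinj : pin j ∈ S := hpinS ▸ mem_image_of_mem pin (mem_range.mpr hj)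
  have hle_count : #{s ∈ S | s < pin j} < #{s ∈ S | s ≤ pin j} :=
    card_lt_card ((ssubset_iff_of_subset (monotone_filter_right _ fun _ _ => le_of_lt)).mpr
      ⟨pin j, by simp [hpinj], by simp⟩)
  have hlt_count : #{x ∈ -absCompl n S | x < pin j} ≤ #{x ∈ -absCompl n S | x < y (j + 1)} :=
    card_le_card (monotone_filter_right _ fun _ _ h => h.trans_le hle)
  rw [card_filter_lt_of_strictMonoOn hpin hpinS hj] at hle_count
  rw [card_filter_lt_of_strictMonoOn hy hyV (show j + 1 < n - #S by omega)] at hlt_count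
  have := hK (pin j) hpinj (hle.trans_lt hyneg)
  omega

theorem exists_abs_eq_of_mem_Icc (hpinS : (range #S).image pin = S)
    (hyV : (range (n - #S)).image y = -absCompl n S) {x : ℤ} (hx : x ∈ Icc 1 (n : ℤ)) :
    (∃ j < #S, |pin j| = x) ∨ ∃ a < n - #S, |y a| = x := by
  by_cases hxS : x ∈ S.image abs
  · obtain ⟨s, hs, rfl⟩ := mem_image.mp hxS
    obtain ⟨j, hj, rfl⟩ := mem_image.mp (hpinS ▸ hs)
    exact Or.inl ⟨j, mem_range.mp hj, rfl⟩
  · have : -x ∈ -absCompl n S := mem_neg'.mpr ((neg_neg x).symm ▸ mem_sdiff.mpr ⟨hx, hxS⟩)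
    obtain ⟨a, ha, hax⟩ := mem_image.mp (hyV ▸ this)
    refine Or.inr ⟨a, mem_range.mp ha, ?_⟩
    rw [hax, abs_neg, abs_of_pos (mem_Icc.mp hx).1]

end Enumeration

theorem apsd_of_zigzag_flip {n t : ℕ} {S : Finset ℤ} {pin y : ℕ → ℤ} (htn : 2 * t < n)
    (hS : (range t).image pin = S) (hy : StrictMonoOn y (Set.Iio (n - t)))
    (hneg : ∀ a < n - t, y a < 0)
    (hcover : ∀ x ∈ Icc 1 (n : ℤ), (∃ j < t, |pin j| = x) ∨ ∃ a < n - t, |y a| = x)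
    (hpv : ∀ j < t, y (j + 1) < pin j) (hlast : 2 * t + 1 = n → -y (n - t - 1) < pin (t - 1)) :
    APSD n S := by
  set y₁ := Function.update y (n - t - 1) (-y (n - t - 1)) with hy₁
  have hpv₁ : ∀ j < t, y₁ (j + 1) < pin j := by
    intro j hj
    by_cases hjm : j + 1 = n - t - 1
    · rw [hjm, hy₁, Function.update_self, show j = t - 1 by omega]
      exact hlast (by omega)
    · rw [hy₁, Function.update_of_ne hjm]
      exact hpv j hj
  have habs₁ : ∀ a, |y₁ a| = |y a| := by
    intro a
    by_cases ha : a = n - t - 1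
    · rw [ha, hy₁, Function.update_self, abs_neg]
    · rw [hy₁, Function.update_of_ne ha]
  refine apsd_of_flip_sign (w₀ := fun i : Fin n => zigzag t pin y i)
    (w₁ := fun i : Fin n => zigzag t pin y₁ i) ⟨n - 1, by omega⟩
    (isSignedPerm_zigzag htn hcover)
    (isSignedPerm_zigzag htn fun x hx => (hcover x hx).imp id
      fun ⟨a, ha, hax⟩ => ⟨a, ha, (habs₁ a).trans hax⟩)
    (by rw [pinSet_zigzag htn hpv hy, hS])
    (by rw [pinSet_zigzag htn hpv₁ (hy.update_neg_of_neg hneg), hS])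
    (fun i hi => zigzag_update_of_ne (by omega) fun h => hi (Fin.ext (by simp only; omega)))
    ?_ ?_
  · show zigzag t pin y (n - 1) < 0
    rw [zigzag_of_le (by omega)]
    exact hneg _ (by omega)
  · show 0 < zigzag t pin y₁ (n - 1)
    rw [zigzag_of_le (by omega), show n - 1 - t = n - t - 1 by omega, hy₁, Function.update_self]
    have := hneg (n - t - 1) (by omega)
    omega

namespace APSB

variable {n : ℕ} {S : Finset ℤ}

theorem image_abs_subset (h : APSB n S) : S.image abs ⊆ Icc 1 (n : ℤ) := by
  obtain ⟨w, hw, hS⟩ := h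
  intro x hx
  obtain ⟨s, hs, rfl⟩ := mem_image.mp hx
  obtain ⟨i, rfl⟩ := pinSet_subset_range w (hS ▸ mem_coe.mpr hs)
  exact mem_Icc.mpr (hw.1 i)

theorem injOn_abs (h : APSB n S) : Set.InjOn abs (S : Set ℤ) := by
  obtain ⟨w, hw, hS⟩ := h
  intro s hs s' hs' he
  obtain ⟨i, rfl⟩ := pinSet_subset_range w (hS ▸ hs)
  obtain ⟨j, rfl⟩ := pinSet_subset_range w (hS ▸ hs')
  rw [hw.2 he]

theorem card_le (h : APSB n S) : #S ≤ (n - 1) / 2 := by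
  obtain ⟨w, -, hS⟩ := h
  obtain ⟨v, rfl⟩ := exists_eq_comp_val w
  rw [pinSet_eq_image_peaks, coe_inj] at hS
  exact hS ▸ card_image_le.trans (card_peaks_le n v)

theorem card_filter_le_lt (h : APSB n S) {q : ℤ} (hq : q ∈ S) (hq0 : q < 0) :
    #{s ∈ S | s ≤ q} < #{x ∈ -absCompl n S | x < q} := by
  obtain ⟨w, hw, hS⟩ := h
  obtain ⟨v, rfl⟩ := exists_eq_comp_val w
  rw [pinSet_eq_image_peaks, coe_inj] at hS
  subst hS
  exact card_filter_le_lt_card_filter_lt hw hq hq0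

theorem apsd_of_two_mul_card_add_one_lt_or_exists_lt (hB : APSB n S)
    (h : 2 * #S + 1 < n ∨ ∃ p ∈ S, ∃ q ∈ absCompl n S, q < p) : APSD n S := by
  have htn : 2 * #S < n := by
    have := hB.card_le
    rcases h with h | ⟨-, -, q, hq, -⟩
    · omega
    · have := (mem_Icc.mp (mem_sdiff.mp hq).1)
      omega
  obtain ⟨pin, hpin, hpinS⟩ := exists_strictMonoOn_image_range S
  obtain ⟨y, hy, hyV⟩ := exists_strictMonoOn_image_range (-absCompl n S)
  rw [card_neg, card_absCompl hB.image_abs_subset hB.injOn_abs] at hy hyV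
  refine apsd_of_zigzag_flip htn hpinS hy
    (fun a ha => neg_of_mem_neg_absCompl (hyV ▸ mem_image_of_mem y (mem_range.mpr ha)))
    (fun x hx => exists_abs_eq_of_mem_Icc hpinS hyV hx)
    (valley_succ_lt_peak hpin hpinS hy hyV htn fun q => hB.card_filter_le_lt) fun hn => ?_
  obtain ⟨p, hp, q, hq, hqp⟩ := h.resolve_left (by omega)
  obtain ⟨a, ha, hqa⟩ := mem_image.mp (hyV ▸ mem_neg'.mpr ((neg_neg q).symm ▸ hq))
  obtain ⟨j, hj, rfl⟩ := mem_image.mp (hpinS ▸ hp)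
  simp only [mem_range] at ha hj
  have hya := hy.monotoneOn ha (show n - #S - 1 < n - #S by omega) (show a ≤ n - #S - 1 by omega)
  have hpinj := hpin.monotoneOn hj (show #S - 1 < #S by omega) (show j ≤ #S - 1 by omega)
  omega

theorem card_eq_of_not_apsd {k : ℕ} (h1 : APSB (2 * k + 1) S) (h2 : ¬ APSD (2 * k + 1) S) :
    #S = k := by
  have := h1.card_le
  by_contra hne
  exact h2 (h1.apsd_of_two_mul_card_add_one_lt_or_exists_lt (Or.inl (by omega)))

theorem lt_of_not_apsd (h1 : APSB n S) (h2 : ¬ APSD n S) {p q : ℤ} (hp : p ∈ S)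
    (hq : q ∈ absCompl n S) : p < q := by
  by_contra! hqp
  have hq0 := (mem_Icc.mp (mem_sdiff.mp hq).1).1
  have hqp' : q ≠ p := by
    rintro rfl
    exact (mem_sdiff.mp hq).2 (mem_image.mpr ⟨q, hp, abs_of_pos hq0⟩)
  exact h2 (h1.apsd_of_two_mul_card_add_one_lt_or_exists_lt
    (Or.inr ⟨p, hp, q, hq, lt_of_le_of_ne hqp hqp'⟩))

end APSB

theorem filter_pos_subset_Icc_sdiff_image_neg {n : ℕ} {S : Finset ℤ}
    (hS : S.image abs ⊆ Icc 1 (n : ℤ)) (hinj : Set.InjOn abs (S : Set ℤ)) :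
    {x ∈ S | 0 < x} ⊆ Icc 1 (n : ℤ) \ {x ∈ S | x < 0}.image Neg.neg := by
  intro p hp
  obtain ⟨hpS, hp0⟩ := mem_filter.mp hp
  have hpn := hS (mem_image_of_mem abs hpS)
  rw [abs_of_pos hp0] at hpn
  refine mem_sdiff.mpr ⟨hpn, fun hmem => ?_⟩
  obtain ⟨s, hs, rfl⟩ := mem_image.mp hmem
  have := hinj (mem_filter.mp hs).1 hpS (abs_neg s).symm
  have := (mem_filter.mp hs).2
  omega

theorem card_filter_pos_add_card_filter_neg {S : Finset ℤ} (h0 : 0 ∉ S) :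
    #{x ∈ S | 0 < x} + #{x ∈ S | x < 0} = #S := by
  rw [← card_filter_add_card_filter_not (s := S) (fun x => 0 < x)]
  congr 2
  refine filter_congr fun x hx => ?_
  rw [not_lt, le_iff_lt_or_eq, or_iff_left]
  rintro rfl
  exact h0 hx

theorem Icc_sdiff_image_neg_sdiff_eq_absCompl (n : ℕ) (S : Finset ℤ) :
    (Icc 1 (n : ℤ) \ {x ∈ S | x < 0}.image Neg.neg) \ {x ∈ S | 0 < x} = absCompl n S := by
  ext x
  simp only [absCompl, mem_sdiff, mem_Icc, mem_image, mem_filter, not_exists, not_and]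
  constructor
  · rintro ⟨⟨hx, hneg⟩, hpos⟩
    refine ⟨hx, fun s hs hsx => ?_⟩
    rcases abs_choice s with h | h <;> rw [h] at hsx
    · exact hpos (hsx ▸ hs) (by omega)
    · exact hneg s ⟨hs, by omega⟩ hsx
  · rintro ⟨hx, h⟩
    refine ⟨⟨hx, fun s ⟨hs, hs0⟩ hsx => h s hs ?_⟩, fun hxS _ => h x hxS ?_⟩
    · rw [← hsx, abs_of_neg hs0]
    · exact abs_of_pos (by omega)

theorem stmt13 (k : ℕ) (S : Finset ℤ) (h1 : APSB (2 * k + 1) S)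
    (h2 : ¬ APSD (2 * k + 1) S) :
    (S.filter fun x => 0 < x) ⊆
      (Finset.Icc 1 (2 * (k : ℤ) + 1)) \ ((S.filter fun x => x < 0).image Neg.neg) ∧
    (S.filter fun x => 0 < x).card = k - (S.filter fun x => x < 0).card ∧
    ∀ p ∈ S.filter fun x => 0 < x,
      ∀ q ∈ ((Finset.Icc 1 (2 * (k : ℤ) + 1)) \
          ((S.filter fun x => x < 0).image Neg.neg)) \ (S.filter fun x => 0 < x),
        p < q := by
  have hcast : 2 * (k : ℤ) + 1 = ↑(2 * k + 1) := by push_cast; ring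
  have h0 : 0 ∉ S := fun h => by simpa using h1.image_abs_subset (mem_image_of_mem abs h)
  rw [hcast, Icc_sdiff_image_neg_sdiff_eq_absCompl]
  refine ⟨filter_pos_subset_Icc_sdiff_image_neg h1.image_abs_subset h1.injOn_abs, ?_,
    fun p hp q hq => h1.lt_of_not_apsd h2 (mem_filter.mp hp).1 hq⟩
  have := card_filter_pos_add_card_filter_neg h0
  have := h1.card_eq_of_not_apsd h2
  omega
end

section
/- Suppose S is an admissible pinnacle set of B_{2k+1} that is not admissible in D_{2k+1}, with negative part N = S ∩ (-ℕ). Then |N| and |S| have the same parity (equivalently, k + |N| is even). -/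
open Finset Function

section Pinnacles

variable {α : Type*} [LinearOrder α] {n : ℕ} {W : ℕ → α}

/-- Words are indexed by `ℕ` so that the neighbours of position `i` are `i ± 1`. -/
def IsPinnacleAt (n : ℕ) (W : ℕ → α) (i : ℕ) : Prop :=
  0 < i ∧ i + 1 < n ∧ W (i - 1) < W i ∧ W (i + 1) < W i

instance (n : ℕ) (W : ℕ → α) : DecidablePred (IsPinnacleAt n W) :=
  fun _ => inferInstanceAs (Decidable (_ ∧ _ ∧ _ ∧ _))

theorem IsPinnacleAt.not_succ {i : ℕ} (h : IsPinnacleAt n W i) :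
    ¬ IsPinnacleAt n W (i + 1) :=
  fun h' => lt_asymm h.2.2.2 (by simpa using h'.2.2.1)

/-- The left neighbours of the pinnacles in `Q`, together with the right neighbour of the last
one, are `#Q + 1` positions that are not pinnacles and carry values below `t`. -/
theorem card_add_one_add_card_filter_lt_le {Q : Finset ℕ} {t : α} (hQ : Q.Nonempty)
    (hpin : ∀ i ∈ Q, IsPinnacleAt n W i ∧ W i ≤ t) :
    #Q + 1 + #{i ∈ Q | W i < t} ≤ #{j ∈ range n | W j < t} := by
  set last := Q.max' hQ
  have hlast := hpin last (Q.max'_mem hQ)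
  set N := insert (last + 1) (Q.image (· - 1))
  have hN : #N = #Q + 1 := by
    rw [card_insert_of_notMem, card_image_of_injOn]
    · intro i hi j hj hij
      have := (hpin i hi).1.1
      have := (hpin j hj).1.1
      simp only at hij
      omega
    · simp only [mem_image, not_exists, not_and]
      intro i hi hi'
      have := Q.le_max' i hi
      omega
  have hdisj : Disjoint N {i ∈ Q | W i < t} := by
    rw [disjoint_insert_left]
    refine ⟨fun h => (Q.le_max' _ (mem_filter.1 h).1).not_gt (Nat.lt_succ_self _), ?_⟩
    simp only [disjoint_left, mem_image, mem_filter]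
    rintro _ ⟨i, hi, rfl⟩ ⟨hi', -⟩
    have h0 := (hpin i hi).1.1
    exact (hpin _ hi').1.not_succ (by rw [Nat.sub_add_cancel h0]; exact (hpin i hi).1)
  have hsub : N ∪ {i ∈ Q | W i < t} ⊆ {j ∈ range n | W j < t} := by
    intro j hj
    simp only [N, mem_union, mem_insert, mem_image, mem_filter, mem_range] at hj ⊢
    rcases hj with (rfl | ⟨i, hi, rfl⟩) | ⟨hj, hjt⟩
    · exact ⟨hlast.1.2.1, hlast.1.2.2.2.trans_le hlast.2⟩
    · obtain ⟨⟨-, hin, hleft, -⟩, hit⟩ := hpin i hi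
      exact ⟨by omega, hleft.trans_le hit⟩
    · exact ⟨by have := (hpin j hj).1.2.1; omega, hjt⟩
  calc #Q + 1 + #{i ∈ Q | W i < t} = #(N ∪ {i ∈ Q | W i < t}) := by
        rw [card_union_of_disjoint hdisj, hN]
    _ ≤ _ := card_le_card hsub

/-- Together with `S ⊆ X` and `2 * #S < #X`, this characterises the pinnacle sets of the
arrangements of `X`. -/
def PinnacleCondition (X S : Finset α) : Prop :=
  ∀ t ∈ S, 2 * #{s ∈ S | s ≤ t} ≤ #{x ∈ X | x < t}

theorem pinnacleCondition_image_range {S : Finset α} (hW : Set.InjOn W (range n))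
    (hS : ∀ x, x ∈ S ↔ ∃ i, IsPinnacleAt n W i ∧ W i = x) :
    PinnacleCondition ((range n).image W) S := by
  intro t ht
  obtain ⟨i₀, hi₀, rfl⟩ := (hS t).1 ht
  set Q := {i ∈ range n | IsPinnacleAt n W i ∧ W i ≤ W i₀}
  have hi₀Q : i₀ ∈ Q := mem_filter.2 ⟨mem_range.2 (by have := hi₀.2.1; omega), hi₀, le_rfl⟩
  have hSQ : #{s ∈ S | s ≤ W i₀} ≤ #Q := by
    refine (card_le_card fun x hx => ?_).trans (card_image_le (f := W))
    obtain ⟨hxS, hxt⟩ := mem_filter.1 hx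
    obtain ⟨i, hi, rfl⟩ := (hS x).1 hxS
    exact mem_image_of_mem W (mem_filter.2 ⟨mem_range.2 (by have := hi.2.1; omega), hi, hxt⟩)
  have hQ : #Q - 1 ≤ #{i ∈ Q | W i < W i₀} := by
    refine (pred_card_le_card_erase (a := i₀)).trans (card_le_card fun i hi => ?_)
    obtain ⟨hne, hiQ⟩ := mem_erase.1 hi
    have hin := (mem_filter.1 hiQ).1
    exact mem_filter.2 ⟨hiQ, (mem_filter.1 hiQ).2.2.lt_of_ne fun h =>
      hne (hW hin (mem_filter.1 hi₀Q).1 h)⟩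
  have hX : #{x ∈ (range n).image W | x < W i₀} = #{j ∈ range n | W j < W i₀} := by
    rw [filter_image, card_image_of_injOn (hW.mono (coe_subset.2 (filter_subset _ _)))]
  have := card_add_one_add_card_filter_lt_le ⟨i₀, hi₀Q⟩ fun i hi => (mem_filter.1 hi).2
  omega

theorem PinnacleCondition.two_mul_card_lt {X S : Finset α} (hc : PinnacleCondition X S)
    (hSX : S ⊆ X) (hX : X.Nonempty) : 2 * #S < #X := by
  rcases S.eq_empty_or_nonempty with rfl | hS
  · simpa using hX.card_pos
  · have hmax := S.max'_mem hS
    have h := hc _ hmax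
    rw [filter_true_of_mem fun x hx => S.le_max' x hx] at h
    have := card_lt_card ((filter_ssubset (p := (· < S.max' hS))).2 ⟨_, hSX hmax, lt_irrefl _⟩)
    omega

end Pinnacles

theorem card_filter_le_eq_card_filter_lt_add_one {α : Type*} [LinearOrder α] {s : Finset α}
    {t : α} (ht : t ∈ s) : #{x ∈ s | x ≤ t} = #{x ∈ s | x < t} + 1 := by
  rw [← card_insert_of_notMem (a := t) (s := {x ∈ s | x < t}) (by simp)]
  congr 1
  ext x
  simp only [mem_filter, mem_insert, le_iff_lt_or_eq]
  aesop

theorem card_filter_sdiff_add_card_filter {α : Type*} [DecidableEq α] {X S : Finset α}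
    (h : S ⊆ X) (p : α → Prop) [DecidablePred p] :
    #{x ∈ X \ S | p x} + #{x ∈ S | p x} = #{x ∈ X | p x} := by
  rw [← card_union_of_disjoint (disjoint_filter_filter sdiff_disjoint), ← filter_union,
    sdiff_union_of_subset h]

section SortedNth

variable {α : Type*} [LinearOrder α] [Inhabited α] {s : Finset α} {i : ℕ}

def sortedNth (s : Finset α) (i : ℕ) : α := (s.sort (· ≤ ·)).getD i default

theorem sortedNth_eq_getElem (h : i < #s) :
    sortedNth s i = (s.sort (· ≤ ·))[i]'(by rwa [length_sort]) :=
  List.getD_eq_getElem _ _ _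

theorem sortedNth_mem (h : i < #s) : sortedNth s i ∈ s := by
  rw [sortedNth_eq_getElem h, ← mem_sort (· ≤ ·)]
  exact List.getElem_mem _

theorem sortedNth_strictMonoOn : StrictMonoOn (sortedNth s) (Set.Iio #s) := by
  intro i hi j hj hij
  rw [sortedNth_eq_getElem hi, sortedNth_eq_getElem hj]
  exact (sortedLT_sort s).strictMono_get (by simpa using hij)

theorem exists_sortedNth_eq {x : α} (hx : x ∈ s) : ∃ i < #s, sortedNth s i = x := by
  obtain ⟨i, hi, rfl⟩ := List.getElem_of_mem ((mem_sort (· ≤ ·)).2 hx)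
  rw [length_sort] at hi
  exact ⟨i, hi, sortedNth_eq_getElem hi⟩

theorem card_filter_lt_sortedNth (h : i < #s) : #{x ∈ s | x < sortedNth s i} = i := by
  have hrange : ((range i : Finset ℕ) : Set ℕ) ⊆ Set.Iio #s := fun j hj =>
    (mem_range.1 hj).trans h
  have : {x ∈ s | x < sortedNth s i} = (range i).image (sortedNth s) := by
    ext x
    simp only [mem_filter, mem_image, mem_range]
    constructor
    · rintro ⟨hx, hlt⟩
      obtain ⟨j, hj, rfl⟩ := exists_sortedNth_eq hx
      exact ⟨j, (sortedNth_strictMonoOn.lt_iff_lt hj h).1 hlt, rfl⟩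
    · rintro ⟨j, hj, rfl⟩
      exact ⟨sortedNth_mem (hj.trans h), sortedNth_strictMonoOn (hj.trans h) h hj⟩
  rw [this, card_image_of_injOn (sortedNth_strictMonoOn.injOn.mono hrange), card_range]

theorem sortedNth_lt_of_lt_card_filter {c : α} (h : i < #{x ∈ s | x < c}) :
    sortedNth s i < c := by
  have hi : i < #s := h.trans_le (card_filter_le _ _)
  by_contra! hc
  have := card_le_card (monotone_filter_right s fun x _ (hx : x < c) => hx.trans_le hc)
  rw [card_filter_lt_sortedNth hi] at this
  omega

theorem PinnacleCondition.sortedNth_sdiff_lt {X S : Finset α} (hc : PinnacleCondition X S)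
    (hSX : S ⊆ X) {j l : ℕ} (hj : j < #S) (hl : l ≤ j + 1) :
    sortedNth (X \ S) l < sortedNth S j := by
  apply sortedNth_lt_of_lt_card_filter
  have hS := hc _ (sortedNth_mem hj)
  have hsplit := card_filter_sdiff_add_card_filter hSX (· < sortedNth S j)
  rw [card_filter_le_eq_card_filter_lt_add_one (sortedNth_mem hj),
    card_filter_lt_sortedNth hj] at hS
  rw [card_filter_lt_sortedNth hj] at hsplit
  omega

end SortedNth

section InterleavedWord

variable {α : Type*} [LinearOrder α] [Inhabited α] {S V : Finset α} {i j : ℕ}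

/-- The word `v₀ s₀ v₁ s₁ ⋯ v₍ₘ₋₁₎ s₍ₘ₋₁₎ vₘ vₘ₊₁ ⋯`, where `s₀ < s₁ < ⋯` enumerate `S` and
`v₀ < v₁ < ⋯` enumerate `V`. -/
def interleavedWord (S V : Finset α) (i : ℕ) : α :=
  if i < 2 * #S then (if i % 2 = 1 then sortedNth S (i / 2) else sortedNth V (i / 2))
  else sortedNth V (i - #S)

theorem interleavedWord_two_mul_add_one (hj : j < #S) :
    interleavedWord S V (2 * j + 1) = sortedNth S j := by
  rw [interleavedWord, if_pos (by omega), if_pos (by omega)]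
  congr 1
  omega

theorem interleavedWord_two_mul (hj : j ≤ #S) :
    interleavedWord S V (2 * j) = sortedNth V j := by
  unfold interleavedWord
  split_ifs <;> first | omega | (congr 1; omega)

theorem interleavedWord_of_le (hi : 2 * #S ≤ i) :
    interleavedWord S V i = sortedNth V (i - #S) := by
  rw [interleavedWord, if_neg (by omega)]

theorem mapsTo_interleavedWord (hSV : #S ≤ #V) :
    Set.MapsTo (interleavedWord S V) (range (#S + #V)) (S ∪ V : Finset α) := by
  intro i hi
  rw [coe_range, Set.mem_Iio] at hi
  rw [mem_coe, mem_union]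
  rcases Nat.lt_or_ge i (2 * #S) with hlt | hge
  · obtain ⟨j, rfl | rfl⟩ : ∃ j, i = 2 * j ∨ i = 2 * j + 1 := ⟨i / 2, by omega⟩
    · rw [interleavedWord_two_mul (by omega)]
      exact Or.inr (sortedNth_mem (by omega))
    · rw [interleavedWord_two_mul_add_one (by omega)]
      exact Or.inl (sortedNth_mem (by omega))
  · rw [interleavedWord_of_le hge]
    exact Or.inr (sortedNth_mem (by omega))

theorem surjOn_interleavedWord (hSV : #S ≤ #V) :
    Set.SurjOn (interleavedWord S V) (range (#S + #V)) (S ∪ V : Finset α) := by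
  intro x hx
  simp only [coe_range, Set.mem_image, Set.mem_Iio]
  rcases mem_union.1 hx with hxS | hxV
  · obtain ⟨j, hj, rfl⟩ := exists_sortedNth_eq hxS
    exact ⟨2 * j + 1, by omega, interleavedWord_two_mul_add_one hj⟩
  · obtain ⟨j, hj, rfl⟩ := exists_sortedNth_eq hxV
    rcases Nat.lt_or_ge j #S with hjS | hjS
    · exact ⟨2 * j, by omega, interleavedWord_two_mul hjS.le⟩
    · exact ⟨j + #S, by omega, by rw [interleavedWord_of_le (by omega), Nat.add_sub_cancel]⟩

theorem isPinnacleAt_interleavedWord_iff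
    (hlow : ∀ j < #S, ∀ l ≤ j + 1, sortedNth V l < sortedNth S j) (hSV : #S < #V) :
    IsPinnacleAt (#S + #V) (interleavedWord S V) i ↔ i % 2 = 1 ∧ i < 2 * #S := by
  constructor
  · intro hi
    by_contra hodd
    refine hi.2.2.2.not_gt ?_
    rcases Nat.lt_or_ge i (2 * #S) with hlt | hge
    · obtain ⟨j, rfl⟩ : ∃ j, i = 2 * j := ⟨i / 2, by omega⟩
      rw [interleavedWord_two_mul (by omega), interleavedWord_two_mul_add_one (by omega)]
      exact hlow j (by omega) j (by omega)
    · have := hi.2.1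
      rw [interleavedWord_of_le hge, interleavedWord_of_le (by omega)]
      exact sortedNth_strictMonoOn (by simp only [Set.mem_Iio]; omega)
        (by simp only [Set.mem_Iio]; omega) (by omega)
  · rintro ⟨hodd, hlt⟩
    obtain ⟨j, rfl⟩ : ∃ j, i = 2 * j + 1 := ⟨i / 2, by omega⟩
    refine ⟨by omega, by omega, ?_, ?_⟩
    · rw [Nat.add_sub_cancel, interleavedWord_two_mul (by omega),
        interleavedWord_two_mul_add_one (by omega)]
      exact hlow j (by omega) j (by omega)
    · rw [show 2 * j + 1 + 1 = 2 * (j + 1) by ring, interleavedWord_two_mul (by omega),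
        interleavedWord_two_mul_add_one (by omega)]
      exact hlow j (by omega) (j + 1) le_rfl

end InterleavedWord

theorem exists_word_of_pinnacleCondition {α : Type*} [LinearOrder α] [Inhabited α]
    {X S : Finset α} (hSX : S ⊆ X) (hcard : 2 * #S < #X) (hc : PinnacleCondition X S) :
    ∃ W : ℕ → α, Set.MapsTo W (range #X) X ∧ Set.InjOn W (range #X) ∧
      ∀ x, x ∈ S ↔ ∃ i, IsPinnacleAt #X W i ∧ W i = x := by
  have hX : #S + #(X \ S) = #X := by rw [add_comm, card_sdiff_add_card_eq_card hSX]
  have hU : S ∪ (X \ S) = X := union_sdiff_of_subset hSX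
  have hSV : #S < #(X \ S) := by omega
  have hmaps := mapsTo_interleavedWord hSV.le
  have hsurj := surjOn_interleavedWord hSV.le
  rw [hX, hU] at hmaps hsurj
  refine ⟨interleavedWord S (X \ S), hmaps,
    injOn_of_surjOn_of_card_le _ hmaps hsurj (by simp), fun x => ?_⟩
  simp_rw [← hX, isPinnacleAt_interleavedWord_iff
    (fun j hj l hl => hc.sortedNth_sdiff_lt hSX hj hl) hSV]
  constructor
  · intro hx
    obtain ⟨j, hj, rfl⟩ := exists_sortedNth_eq hx
    exact ⟨2 * j + 1, ⟨by omega, by omega⟩, interleavedWord_two_mul_add_one hj⟩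
  · rintro ⟨i, ⟨hodd, hlt⟩, rfl⟩
    obtain ⟨j, rfl⟩ : ∃ j, i = 2 * j + 1 := ⟨i / 2, by omega⟩
    rw [interleavedWord_two_mul_add_one (by omega)]
    exact sortedNth_mem (by omega)

section FinWords

variable {n : ℕ} {w : Fin n → ℤ} {S : Finset ℤ}

theorem mem_pinSet_iff {W : ℕ → ℤ} (hW : ∀ j (h : j < n), W j = w ⟨j, h⟩) {x : ℤ} :
    x ∈ PinSet n w ↔ ∃ i, IsPinnacleAt n W i ∧ W i = x := by
  constructor
  · rintro ⟨i, h0, h2, rfl, hl, hr⟩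
    refine ⟨i, ⟨h0, h2, ?_, ?_⟩, hW i _⟩
    · rwa [hW (i - 1) (by omega), hW i (by omega)]
    · rwa [hW (i + 1) h2, hW i (by omega)]
  · rintro ⟨i, ⟨h0, h2, hl, hr⟩, rfl⟩
    refine ⟨i, h0, h2, (hW i _).symm, ?_, ?_⟩
    · rwa [hW (i - 1) (by omega), hW i (by omega)] at hl
    · rwa [hW (i + 1) h2, hW i (by omega)] at hr

theorem subset_image_of_pinSet (h : PinSet n w = S) : S ⊆ univ.image w := by
  intro x hx
  obtain ⟨i, -, -, rfl, -⟩ := (h ▸ mem_coe.2 hx : x ∈ PinSet n w)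
  exact mem_image_of_mem w (mem_univ _)

theorem pinnacleCondition_of_pinSet (hw : Injective w) (h : PinSet n w = S) :
    PinnacleCondition (univ.image w) S := by
  set W := extend Fin.val w 0
  have hW : ∀ j (h : j < n), W j = w ⟨j, h⟩ := fun j h =>
    Fin.val_injective.extend_apply w 0 ⟨j, h⟩
  have himage : (range n).image W = univ.image w := by
    ext x
    simp only [mem_image, mem_range, mem_univ, true_and]
    exact ⟨fun ⟨j, hj, hx⟩ => ⟨⟨j, hj⟩, hW j hj ▸ hx⟩,
      fun ⟨i, hx⟩ => ⟨i, i.2, by rw [hW]; exact hx⟩⟩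
  rw [← himage]
  refine pinnacleCondition_image_range (fun i hi j hj hij => ?_) fun x => ?_
  · rw [mem_coe, mem_range] at hi hj
    rw [hW i hi, hW j hj] at hij
    exact Fin.mk.inj_iff.1 (hw hij)
  · rw [← mem_coe, ← h, mem_pinSet_iff hW]

theorem exists_perm_pinSet_eq {v : Fin n → ℤ} (hv : Injective v) (hS : S ⊆ univ.image v)
    (hcard : 2 * #S < n) (hc : PinnacleCondition (univ.image v) S) :
    ∃ σ : Equiv.Perm (Fin n), PinSet n (v ∘ σ) = S := by
  have hX : #(univ.image v) = n := by
    rw [card_image_of_injective _ hv, card_univ, Fintype.card_fin]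
  obtain ⟨W, hmaps, hinj, hpin⟩ := exists_word_of_pinnacleCondition hS (hX.symm ▸ hcard) hc
  rw [hX] at hmaps hinj hpin
  have : Nonempty (Fin n) := ⟨⟨0, by omega⟩⟩
  have hvW : ∀ i : Fin n, v (invFun v (W i)) = W i := fun i => by
    obtain ⟨j, -, hj⟩ := mem_image.1 (hmaps (mem_range.2 i.2))
    exact invFun_eq ⟨j, hj⟩
  have hinj' : Injective fun i : Fin n => invFun v (W i) := fun i j hij =>
    Fin.ext (hinj (mem_range.2 i.2) (mem_range.2 j.2)
      (by rw [← hvW i, ← hvW j]; exact congrArg v hij))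
  refine ⟨Equiv.ofBijective _ (Finite.injective_iff_bijective.1 hinj'), ?_⟩
  ext x
  rw [mem_pinSet_iff (W := W) fun j h => (hvW ⟨j, h⟩).symm, mem_coe, hpin]

end FinWords

section Update

variable {ι α : Type*} [Fintype ι] {w : ι → α}

theorem card_filter_comp_perm (σ : Equiv.Perm ι) (q : ι → Prop) [DecidablePred q] :
    #{j | q (σ j)} = #{j | q j} := by
  conv_rhs => rw [← map_univ_equiv σ, filter_map, card_map]
  rfl

theorem card_filter_image_univ [DecidableEq α] (hw : Injective w) (p : α → Prop)
    [DecidablePred p] : #{x ∈ univ.image w | p x} = #{j | p (w j)} := by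
  rw [filter_image, card_image_of_injective _ hw]

variable [DecidableEq ι]

theorem card_filter_update_add (w : ι → α) (i : ι) (b : α) (p : α → Prop) [DecidablePred p] :
    #{j | p (update w i b j)} + (if p (w i) then 1 else 0) =
      #{j | p (w j)} + (if p b then 1 else 0) := by
  simp only [card_filter, Fintype.sum_eq_add_sum_compl i, update_self]
  rw [sum_congr rfl fun j hj => by rw [update_of_ne (by simpa using hj)]]
  ring

variable [LinearOrder α] {S : Finset α} {i : ι} {b : α}

theorem subset_image_update (hSX : S ⊆ univ.image w) (hi : w i ∉ S) :
    S ⊆ univ.image (update w i b) := by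
  intro x hx
  obtain ⟨j, -, rfl⟩ := mem_image.1 (hSX hx)
  have hji : j ≠ i := by rintro rfl; exact hi hx
  exact mem_image.2 ⟨j, mem_univ j, update_of_ne hji _ _⟩

theorem PinnacleCondition.image_update_of_le (hc : PinnacleCondition (univ.image w) S)
    (hw : Injective w) (hw' : Injective (update w i b)) (hb : b ≤ w i) :
    PinnacleCondition (univ.image (update w i b)) S := by
  intro t ht
  have hcount := card_filter_update_add w i b (· < t)
  have h := hc t ht
  rw [card_filter_image_univ hw] at h
  rw [card_filter_image_univ hw']
  split_ifs at hcount with h1 h2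
  · omega
  · exact absurd (hb.trans_lt h1) h2
  · omega
  · omega

theorem PinnacleCondition.image_update_of_forall_le (hc : PinnacleCondition (univ.image w) S)
    (hw : Injective w) (hw' : Injective (update w i b)) (hSX : S ⊆ univ.image w) (hi : w i ∉ S)
    (hmax : ∀ x ∈ univ.image w \ S, x ≤ w i) (hcard : 2 * #S + 2 ≤ Fintype.card ι) :
    PinnacleCondition (univ.image (update w i b)) S := by
  intro t ht
  have hcount := card_filter_update_add w i b (· < t)
  have h := hc t ht
  rw [card_filter_image_univ hw] at h
  rw [card_filter_image_univ hw']
  rcases lt_or_gt_of_ne (show t ≠ w i by rintro rfl; exact hi ht) with hti | hti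
  · rw [if_neg hti.not_gt] at hcount
    split_ifs at hcount <;> omega
  · have hsplit := card_filter_sdiff_add_card_filter hSX (· < t)
    rw [filter_true_of_mem fun x hx => (hmax x hx).trans_lt hti, card_sdiff_of_subset hSX,
      card_image_of_injective _ hw, card_univ, card_filter_image_univ hw] at hsplit
    rw [card_filter_le_eq_card_filter_lt_add_one ht] at h ⊢
    have hS := card_lt_card ((filter_ssubset (p := (· < t))).2 ⟨t, ht, lt_irrefl t⟩)
    split_ifs at hcount <;> omega

end Update

namespace IsSignedPerm

variable {n : ℕ} {w : Fin n → ℤ}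

theorem injective (hw : IsSignedPerm n w) : Injective w :=
  fun _ _ h => hw.2 (congrArg abs h)

theorem card_image (hw : IsSignedPerm n w) : #(univ.image w) = n := by
  rw [card_image_of_injective _ hw.injective, card_univ, Fintype.card_fin]

theorem ne_zero (hw : IsSignedPerm n w) (i : Fin n) : w i ≠ 0 := fun h => by
  simpa [h] using (hw.1 i).1

theorem comp_perm (hw : IsSignedPerm n w) (σ : Equiv.Perm (Fin n)) : IsSignedPerm n (w ∘ σ) :=
  ⟨fun i => hw.1 (σ i), hw.2.comp σ.injective⟩

theorem update_neg (hw : IsSignedPerm n w) (i : Fin n) :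
    IsSignedPerm n (update w i (-w i)) := by
  have habs : ∀ j, |update w i (-w i) j| = |w j| := fun j => by
    rcases eq_or_ne j i with rfl | hj
    · simp
    · rw [update_of_ne hj]
  exact ⟨fun j => habs j ▸ hw.1 j, fun j j' h => hw.2 (by simpa only [habs] using h)⟩

theorem even_card_neg_update_neg_iff (hw : IsSignedPerm n w) (i : Fin n) :
    Even #{j | update w i (-w i) j < 0} ↔ ¬ Even #{j | w j < 0} := by
  have hcount := card_filter_update_add w i (-w i) (· < 0)
  rcases lt_or_gt_of_ne (hw.ne_zero i) with h | h
  · rw [if_pos h, if_neg (by omega), add_zero] at hcount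
    rw [← hcount, Nat.even_add_one, not_not]
  · rw [if_neg (by omega), if_pos (by omega), add_zero] at hcount
    rw [hcount, Nat.even_add_one]

end IsSignedPerm

theorem apsd_of_pinnacleCondition {n : ℕ} {v : Fin n → ℤ} {S : Finset ℤ} (hv : IsSignedPerm n v)
    (hS : S ⊆ univ.image v) (hcard : 2 * #S < n) (hc : PinnacleCondition (univ.image v) S)
    (heven : Even #{i | v i < 0}) : APSD n S := by
  obtain ⟨σ, hσ⟩ := exists_perm_pinSet_eq hv.injective hS hcard hc
  exact ⟨v ∘ σ, hv.comp_perm σ, by rwa [comp_def, card_filter_comp_perm σ (v · < 0)], hσ⟩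

theorem stmt14 (k : ℕ) (S : Finset ℤ) (h1 : APSB (2 * k + 1) S)
    (h2 : ¬ APSD (2 * k + 1) S) :
    (S.filter fun x => x < 0).card % 2 = S.card % 2 ∧
    Even (k + (S.filter fun x => x < 0).card) := by
  obtain ⟨w, hw, hpin⟩ := h1
  set X := univ.image w
  have hX : #X = 2 * k + 1 := hw.card_image
  have hSX : S ⊆ X := subset_image_of_pinSet hpin
  have hc : PinnacleCondition X S := pinnacleCondition_of_pinSet hw.injective hpin
  have hm : 2 * #S < 2 * k + 1 := hX ▸ hc.two_mul_card_lt hSX (card_pos.1 (by omega))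
  have hodd : ¬ Even #{j | w j < 0} := fun he => h2 ⟨w, hw, he, hpin⟩
  obtain ⟨i, hiS, hmax⟩ : ∃ i, w i ∉ S ∧ ∀ x ∈ X \ S, x ≤ w i := by
    have hne : (X \ S).Nonempty := card_pos.1 (by rw [card_sdiff_of_subset hSX]; omega)
    obtain ⟨hu, huS⟩ := mem_sdiff.1 ((X \ S).max'_mem hne)
    obtain ⟨i, -, hi⟩ := mem_image.1 hu
    exact ⟨i, hi ▸ huS, fun x hx => hi ▸ (X \ S).le_max' x hx⟩
  have hflip : ¬ PinnacleCondition (univ.image (update w i (-w i))) S := fun hc' =>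
    h2 (apsd_of_pinnacleCondition (hw.update_neg i) (subset_image_update hSX hiS) hm hc'
      ((hw.even_card_neg_update_neg_iff i).2 hodd))
  have hneg : w i < 0 := by
    by_contra h
    exact hflip (hc.image_update_of_le hw.injective (hw.update_neg i).injective (by omega))
  have hk : k ≤ #S := by
    by_contra h
    exact hflip (hc.image_update_of_forall_le hw.injective (hw.update_neg i).injective hSX hiS
      hmax (by rw [Fintype.card_fin]; omega))
  have hXneg := card_filter_sdiff_add_card_filter hSX (· < 0)
  rw [filter_true_of_mem fun x hx => (hmax x hx).trans_lt hneg, card_sdiff_of_subset hSX,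
    card_filter_image_univ hw.injective] at hXneg
  rw [Nat.not_even_iff] at hodd
  rw [Nat.even_iff]
  omega
end
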